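/- arXiv:1210.1351 — 4 statements merged into one kernel-verified Lean document; each statement's English description precedes it below -/
import Mathlib

section
/- Let Π_q denote the cone of real positive semidefinite symmetric q×q matrices. A continuous function φ : Π_q → ℂ with φ(0) = 1 satisfies the product formula φ(a)·φ(b) = φ(√(a² + b²)) for all a, b ∈ Π_q if and only if there exists a complex symmetric q×q matrix B such that φ(a) = exp(−⟨a², B⟩) for all a ∈ Π_q, where ⟨x, y⟩ = tr(xy) extended bilinearly. -/
/-!
With `ψ s = φ (√s)` the product formula says that `ψ` is multiplicative on the cone of positive
semidefinite matrices. Along each ray, `t ↦ ψ (t • s)` is a continuous semigroup, hence equal to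
`t ↦ exp (c s * t)`; the rates `c s` are additive and positively homogeneous on the cone, so they
extend to a linear functional on all matrices, i.e. a trace pairing against some matrix, which
can be symmetrised since only symmetric arguments `a²` matter. The converse is
`(√(a² + b²))² = a² + b²`.
-/

open Matrix Complex

open scoped ComplexOrder in
noncomputable def Matrix.PosSemidef.sqrt {n : Type*} {𝕜 : Type*} [Fintype n] [RCLike 𝕜]
    [DecidableEq n] {A : Matrix n n 𝕜} (hA : A.PosSemidef) : Matrix n n 𝕜 :=
  hA.1.eigenvectorUnitary.1 * diagonal ((↑) ∘ (√·) ∘ hA.1.eigenvalues) *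
    (star hA.1.eigenvectorUnitary : Matrix n n 𝕜)

open Set

theorem Complex.hasDerivAt_exp_mul_ofReal (c : ℂ) (t : ℝ) :
    HasDerivAt (fun t : ℝ => exp (c * t)) (c * exp (c * t)) t := by
  simpa [mul_comm] using ((hasDerivAt_id t).ofReal_comp.const_mul c).cexp

theorem Complex.eq_of_exp_mul_ofReal_eq {α β : ℂ}
    (h : ∀ t : ℝ, 0 ≤ t → exp (α * t) = exp (β * t)) : α = β := by
  have hα := (hasDerivAt_exp_mul_ofReal α 0).hasDerivWithinAt (s := Ici 0)
  have hβ := ((hasDerivAt_exp_mul_ofReal β 0).hasDerivWithinAt (s := Ici 0)).congr_of_mem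
    (fun t ht => h t ht) (mem_Ici.2 le_rfl)
  simpa using (uniqueDiffWithinAt_Ici 0).eq_deriv _ hα hβ

theorem exists_intervalIntegral_ne_zero {h : ℝ → ℂ} (hc : Continuous h) (h0 : h 0 ≠ 0) :
    ∃ δ > 0, ∫ s in (0 : ℝ)..δ, h s ≠ 0 := by
  have hne := (hc.integral_hasStrictDerivAt 0 0).hasDerivAt.eventually_ne (c := 0) (by simpa)
  exact ((hne.filter_mono (nhdsGT_le_nhdsNE 0)).and self_mem_nhdsWithin).exists.imp
    fun δ h => ⟨h.2, h.1⟩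

theorem Complex.exists_eq_exp_mul_of_continuous_of_map_add {h : ℝ → ℂ} (hc : Continuous h)
    (h0 : h 0 = 1) (hadd : ∀ t u : ℝ, 0 ≤ t → 0 ≤ u → h (t + u) = h t * h u) :
    ∃ c : ℂ, ∀ t : ℝ, 0 ≤ t → h t = exp (c * t) := by
  set H : ℝ → ℂ := fun x => ∫ s in (0 : ℝ)..x, h s
  have hH : ∀ x, HasDerivAt H (h x) x := fun x => (hc.integral_hasStrictDerivAt 0 x).hasDerivAt
  obtain ⟨δ, hδ, hHδ⟩ := exists_intervalIntegral_ne_zero hc (by simp [h0])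
  -- `h` is a difference quotient of its own primitive, hence differentiable
  have hshift : ∀ u, 0 ≤ u → h u = (H (u + δ) - H u) / H δ := by
    intro u hu
    rw [eq_div_iff hHδ]
    calc h u * H δ = ∫ s in (0 : ℝ)..δ, h (s + u) := by
          rw [← intervalIntegral.integral_const_mul]
          refine intervalIntegral.integral_congr fun s hs => ?_
          rw [uIcc_of_le hδ.le] at hs
          rw [hadd s u hs.1 hu, mul_comm]
      _ = H (u + δ) - H u := by
          rw [intervalIntegral.integral_comp_add_right, intervalIntegral.integral_interval_sub_left
            (hc.intervalIntegrable _ _) (hc.intervalIntegrable _ _), zero_add, add_comm]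
  set c := (h δ - 1) / H δ
  have hderiv : ∀ u, 0 ≤ u → HasDerivWithinAt h (c * h u) (Ici 0) u := by
    intro u hu
    have hF := (((hH (u + δ)).comp_add_const u δ).sub (hH u)).div_const (H δ)
    refine (hF.hasDerivWithinAt.congr_of_mem hshift hu).congr_deriv ?_
    rw [hadd u δ hu hδ.le]
    field_simp
    ring
  refine ⟨c, fun t ht => ?_⟩
  set g : ℝ → ℂ := fun u => exp (-c * u) * h u
  have hg : ∀ u ∈ Ico 0 t, HasDerivWithinAt g 0 (Ici u) u := fun u hu =>
    (((hasDerivAt_exp_mul_ofReal (-c) u).hasDerivWithinAt.mul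
      (hderiv u hu.1)).mono (Ici_subset_Ici.2 hu.1)).congr_deriv (by ring)
  have hgt := constant_of_has_deriv_right_zero (by fun_prop) hg t ⟨ht, le_rfl⟩
  simp only [g, ofReal_zero, mul_zero, exp_zero, h0, mul_one] at hgt
  calc h t = exp (c * t) * (exp (-c * t) * h t) := by rw [← mul_assoc, ← exp_add]; simp
    _ = exp (c * t) := by rw [hgt, mul_one]

theorem Complex.exists_eq_exp_mul_of_continuousOn_of_map_add {h : ℝ → ℂ}
    (hc : ContinuousOn h (Ici 0)) (h0 : h 0 = 1)
    (hadd : ∀ t u : ℝ, 0 ≤ t → 0 ≤ u → h (t + u) = h t * h u) :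
    ∃ c : ℂ, ∀ t : ℝ, 0 ≤ t → h t = exp (c * t) := by
  obtain ⟨c, hc⟩ := exists_eq_exp_mul_of_continuous_of_map_add (h := fun t => h (max t 0))
    (hc.comp_continuous (by fun_prop) fun t => le_max_right t 0) (by simpa using h0)
    fun t u ht hu => by simp [ht, hu, add_nonneg, hadd]
  exact ⟨c, fun t ht => by simpa [ht] using hc t ht⟩

section LinearExtension

variable {𝕜 V W : Type*} [Field 𝕜] [LinearOrder 𝕜] [IsStrictOrderedRing 𝕜]
  [AddCommGroup V] [Module 𝕜 V] [AddCommGroup W] [Module 𝕜 W]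

-- the graph of the linear extension of `D` from `C` to its span
def PointedCone.differenceGraph (C : PointedCone 𝕜 V) (D : V → W)
    (hadd : ∀ x ∈ C, ∀ y ∈ C, D (x + y) = D x + D y)
    (hsmul : ∀ x ∈ C, ∀ r : 𝕜, 0 ≤ r → D (r • x) = r • D x) : Submodule 𝕜 (V × W) where
  carrier := {p | ∃ x ∈ C, ∃ y ∈ C, p = (x - y, D x - D y)}
  zero_mem' := ⟨0, C.zero_mem, 0, C.zero_mem, by rw [sub_self, sub_self, Prod.mk_zero_zero]⟩
  add_mem' := by
    rintro _ _ ⟨x, hx, y, hy, rfl⟩ ⟨x', hx', y', hy', rfl⟩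
    refine ⟨x + x', C.add_mem hx hx', y + y', C.add_mem hy hy', ?_⟩
    rw [hadd x hx x' hx', hadd y hy y' hy']
    ext <;> simp only [Prod.fst_add, Prod.snd_add] <;> abel
  smul_mem' := by
    rintro r _ ⟨x, hx, y, hy, rfl⟩
    rcases le_total 0 r with hr | hr
    · refine ⟨r • x, C.smul_mem hr hx, r • y, C.smul_mem hr hy, ?_⟩
      simp [hsmul x hx r hr, hsmul y hy r hr, smul_sub]
    · have hr' : 0 ≤ -r := neg_nonneg.2 hr
      refine ⟨-r • y, C.smul_mem hr' hy, -r • x, C.smul_mem hr' hx, ?_⟩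
      rw [hsmul x hx _ hr', hsmul y hy _ hr']
      ext <;> simp only [Prod.smul_mk, smul_sub, neg_smul] <;> abel

theorem PointedCone.snd_eq_zero_of_mem_differenceGraph {C : PointedCone 𝕜 V} {D : V → W}
    {hadd : ∀ x ∈ C, ∀ y ∈ C, D (x + y) = D x + D y}
    {hsmul : ∀ x ∈ C, ∀ r : 𝕜, 0 ≤ r → D (r • x) = r • D x} (p : V × W)
    (hp : p ∈ C.differenceGraph D hadd hsmul) (hp1 : p.1 = 0) : p.2 = 0 := by
  obtain ⟨x, -, y, -, rfl⟩ := hp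
  exact sub_eq_zero.2 (congrArg D (sub_eq_zero.1 hp1))

theorem PointedCone.exists_linearMap_eqOn (C : PointedCone 𝕜 V) (D : V → W)
    (hadd : ∀ x ∈ C, ∀ y ∈ C, D (x + y) = D x + D y)
    (hsmul : ∀ x ∈ C, ∀ r : 𝕜, 0 ≤ r → D (r • x) = r • D x) :
    ∃ L : V →ₗ[𝕜] W, ∀ x ∈ C, L x = D x := by
  set G := C.differenceGraph D hadd hsmul
  have hD0 : D 0 = 0 := by simpa using hsmul 0 C.zero_mem 0 le_rfl
  have hmem : ∀ x ∈ C, (x, D x) ∈ G := fun x hx => ⟨x, hx, 0, C.zero_mem, by rw [hD0]; simp⟩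
  obtain ⟨L, hL⟩ := LinearMap.exists_extend G.toLinearPMap.toFun
  refine ⟨L, fun x hx => ?_⟩
  have hdom : x ∈ G.toLinearPMap.domain := ⟨(x, D x), hmem x hx, rfl⟩
  have hgraph := G.mem_graph_toLinearPMap snd_eq_zero_of_mem_differenceGraph ⟨x, hdom⟩
  have := snd_eq_zero_of_mem_differenceGraph _ (G.sub_mem hgraph (hmem x hx)) (sub_self x)
  rw [← sub_eq_zero, ← this]
  exact congrArg (· - D x) (LinearMap.congr_fun hL ⟨x, hdom⟩)

end LinearExtension

theorem PointedCone.exists_linearMap_eq_exp {V : Type*} [AddCommGroup V] [Module ℝ V]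
    (C : PointedCone ℝ V) (ψ : V → ℂ) (h0 : ψ 0 = 1)
    (hmul : ∀ x ∈ C, ∀ y ∈ C, ψ (x + y) = ψ x * ψ y)
    (hcont : ∀ x ∈ C, ContinuousOn (fun t : ℝ => ψ (t • x)) (Ici 0)) :
    ∃ L : V →ₗ[ℝ] ℂ, ∀ x ∈ C, ψ x = exp (L x) := by
  have hray : ∀ x ∈ C, ∃ c : ℂ, ∀ t : ℝ, 0 ≤ t → ψ (t • x) = exp (c * t) := fun x hx =>
    exists_eq_exp_mul_of_continuousOn_of_map_add (hcont x hx) (by simpa using h0)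
      fun t u ht hu => by rw [add_smul, hmul _ (C.smul_mem ht hx) _ (C.smul_mem hu hx)]
  choose! D hD using hray
  obtain ⟨L, hL⟩ := C.exists_linearMap_eqOn D
    (fun x hx y hy => eq_of_exp_mul_ofReal_eq fun t ht => by
      rw [← hD _ (C.add_mem hx hy) t ht, smul_add, hmul _ (C.smul_mem ht hx) _ (C.smul_mem ht hy),
        hD x hx t ht, hD y hy t ht, ← exp_add, add_mul])
    (fun x hx r hr => eq_of_exp_mul_ofReal_eq fun t ht => by
      rw [← hD _ (C.smul_mem hr hx) t ht, smul_smul, hD x hx _ (mul_nonneg ht hr), real_smul]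
      congr 1
      push_cast
      ring)
  exact ⟨L, fun x hx => by simpa [hL x hx] using hD x hx 1 zero_le_one⟩

theorem CFC.sqrt_smul {A : Type*} [PartialOrder A] [Ring A] [StarRing A] [TopologicalSpace A]
    [StarOrderedRing A] [Algebra ℝ A] [ContinuousFunctionalCalculus ℝ A IsSelfAdjoint]
    [NonnegSpectrumClass ℝ A] [IsSemitopologicalRing A] [T2Space A] [PosSMulMono ℝ A]
    {t : ℝ} (ht : 0 ≤ t) {a : A} (ha : 0 ≤ a) : CFC.sqrt (t • a) = √t • CFC.sqrt a := by
  have h0 : 0 ≤ √t • CFC.sqrt a := smul_nonneg (Real.sqrt_nonneg t) (CFC.sqrt_nonneg a)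
  rw [← CFC.sqrt_sq (√t • CFC.sqrt a), smul_pow, CFC.sq_sqrt a, Real.sq_sqrt ht]

open scoped ComplexOrder MatrixOrder in
theorem Matrix.PosSemidef.sqrt_eq_cfcSqrt {n 𝕜 : Type*} [Fintype n] [DecidableEq n] [RCLike 𝕜]
    {A : Matrix n n 𝕜} (hA : A.PosSemidef) : hA.sqrt = CFC.sqrt A := by
  rw [CFC.sqrt_eq_real_sqrt A hA.nonneg, cfcₙ_eq_cfc, hA.1.cfc_eq]
  simp only [IsHermitian.cfc, Unitary.conjStarAlgAut_apply, Matrix.PosSemidef.sqrt]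

theorem Matrix.exists_trace_map_mul_eq {n R A : Type*} [Fintype n] [DecidableEq n]
    [CommSemiring R] [Semiring A] [Algebra R A] (L : Matrix n n R →ₗ[R] A) :
    ∃ B : Matrix n n A, ∀ x, L x = (x.map (algebraMap R A) * B).trace := by
  refine ⟨Matrix.of fun j i => L (single i j 1), fun x => ?_⟩
  conv_lhs => rw [x.matrix_eq_sum_single]
  simp only [map_sum, trace, diag_apply, mul_apply, map_apply, of_apply]
  refine Finset.sum_congr rfl fun i _ => Finset.sum_congr rfl fun j _ => ?_
  rw [← Algebra.smul_def, ← map_smul, smul_single, smul_eq_mul, mul_one]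

theorem Matrix.exists_isSymm_trace_map_mul_eq {n : Type*} [Fintype n] [DecidableEq n]
    (L : Matrix n n ℝ →ₗ[ℝ] ℂ) :
    ∃ B : Matrix n n ℂ, B.IsSymm ∧ ∀ x, x.IsSymm → L x = (x.map ofReal * B).trace := by
  obtain ⟨B, hB⟩ := exists_trace_map_mul_eq L
  refine ⟨(1 / 2 : ℂ) • (B + Bᵀ), ?_, fun x hx => ?_⟩
  · simp [IsSymm, add_comm]
  · have hT : (x.map ofReal * Bᵀ).trace = (x.map ofReal * B).trace := by
      rw [← trace_transpose, transpose_mul, transpose_transpose, (hx.map _).eq, trace_mul_comm]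
    rw [hB, Complex.coe_algebraMap, Matrix.mul_smul, mul_add, trace_smul, trace_add, hT,
      smul_eq_mul]
    ring

/-- A continuous function `φ` on the cone of real positive semidefinite
symmetric `q×q` matrices with `φ 0 = 1` satisfies the product formula
`φ a * φ b = φ (√(a² + b²))` iff there is a complex symmetric matrix `B` with
`φ a = exp (−⟨a², B⟩)`, where `⟨x, y⟩ = tr (x y)` extended ℂ-bilinearly. -/
theorem stmt1 (q : ℕ) (φ : Matrix (Fin q) (Fin q) ℝ → ℂ)
    (hcont : ContinuousOn φ {a | a.PosSemidef}) (h0 : φ 0 = 1) :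
    (∀ (a b : Matrix (Fin q) (Fin q) ℝ) (ha : a.PosSemidef) (hb : b.PosSemidef),
        φ a * φ b = φ ((ha.pow 2).add (hb.pow 2)).sqrt) ↔
      ∃ B : Matrix (Fin q) (Fin q) ℂ, B.IsSymm ∧
        ∀ a : Matrix (Fin q) (Fin q) ℝ, a.PosSemidef →
          φ a = Complex.exp (-((a ^ 2).map (Complex.ofReal) * B).trace) := by
  open scoped MatrixOrder in
  constructor
  · intro hmul
    have hψmul : ∀ x : Matrix (Fin q) (Fin q) ℝ, 0 ≤ x → ∀ y, 0 ≤ y →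
        φ (CFC.sqrt (x + y)) = φ (CFC.sqrt x) * φ (CFC.sqrt y) := by
      intro x hx y hy
      have := hmul _ _ (CFC.sqrt_nonneg x).posSemidef (CFC.sqrt_nonneg y).posSemidef
      rw [PosSemidef.sqrt_eq_cfcSqrt, CFC.sq_sqrt x hx, CFC.sq_sqrt y hy] at this
      exact this.symm
    have hψcont : ∀ x : Matrix (Fin q) (Fin q) ℝ, 0 ≤ x →
        ContinuousOn (fun t : ℝ => φ (CFC.sqrt (t • x))) (Ici 0) := by
      intro x hx
      refine ContinuousOn.congr (f := fun t : ℝ => φ (√t • CFC.sqrt x)) ?_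
        fun t ht => by rw [CFC.sqrt_smul ht hx]
      exact (hcont.comp_continuous (by fun_prop) fun t =>
        (smul_nonneg (Real.sqrt_nonneg t) (CFC.sqrt_nonneg x)).posSemidef).continuousOn
    obtain ⟨L, hL⟩ := (PointedCone.positive ℝ (Matrix (Fin q) (Fin q) ℝ)).exists_linearMap_eq_exp
      (fun s => φ (CFC.sqrt s)) (by rw [CFC.sqrt_zero, h0]) hψmul hψcont
    obtain ⟨B, hB, hLB⟩ := exists_isSymm_trace_map_mul_eq (-L)
    refine ⟨B, hB, fun a ha => ?_⟩
    calc φ a = φ (CFC.sqrt (a ^ 2)) := by rw [CFC.sqrt_sq a ha.nonneg]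
      _ = exp (L (a ^ 2)) := hL _ (ha.pow 2).nonneg
      _ = _ := by rw [← hLB _ (isHermitian_iff_isSymm.1 (ha.pow 2).1), LinearMap.neg_apply, neg_neg]
  · rintro ⟨B, -, hB⟩ a b ha hb
    have hab := (ha.pow 2).add (hb.pow 2)
    rw [hab.sqrt_eq_cfcSqrt, hB a ha, hB b hb, hB _ (CFC.sqrt_nonneg _).posSemidef, ← exp_add,
      CFC.sq_sqrt _ hab.nonneg, Matrix.map_add _ ofReal_add, add_mul, trace_add, neg_add]
end

section
/- Let ψ : Π_q → ℂ be a continuous function on the cone of real positive semidefinite q×q matrices satisfying ψ(a)ψ(b) = ψ(a+b) for all a, b ∈ Π_q and ψ(0) = 1. Then ψ(a) ≠ 0 for all a ∈ Π_q, and ψ extends uniquely to a continuous function on the space H_q of all real symmetric q×q matrices satisfying the same multiplicative functional equation, via ψ(d − cI) := ψ(d)/ψ(cI) for d ∈ Π_q, c ≥ 0. -/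
/-!
Halving shows that a zero of `ψ` at `a` forces zeros at `2⁻ⁿ • a → 0`, contradicting `ψ 0 = 1`.
A symmetric `x` becomes positive semidefinite after adding `c • 1` for any `c` at least the
entrywise `ℓ¹` norm of `x`, and multiplicativity makes `ψ (x + c • 1) / ψ (c • 1)` independent of
such `c`; choosing `c` continuously in `x` gives a continuous multiplicative extension, which the
formula forces to be unique.
-/

open Filter Topology

theorem apply_ne_zero_of_mul_self_eq_apply_add {E M : Type*} [AddCommMonoid E] [Module ℝ E]
    [TopologicalSpace E] [ContinuousSMul ℝ E] [MulZeroClass M] [NoZeroDivisors M]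
    [TopologicalSpace M] [T1Space M] {K : Set E} {ψ : E → M}
    (hK : ∀ a ∈ K, ∀ t : ℝ, 0 ≤ t → t • a ∈ K) (hcont : ContinuousWithinAt ψ K 0)
    (h0 : ψ 0 ≠ 0) (hmul : ∀ a ∈ K, ψ a * ψ a = ψ (a + a)) {a : E} (ha : a ∈ K) :
    ψ a ≠ 0 := by
  intro hz
  have hhalf : ∀ k : ℕ, ψ ((2⁻¹ : ℝ) ^ k • a) = 0 := by
    intro k
    induction k with
    | zero => simpa using hz
    | succ k ih =>
      have hdouble : (2⁻¹ : ℝ) ^ (k + 1) • a + (2⁻¹ : ℝ) ^ (k + 1) • a = (2⁻¹ : ℝ) ^ k • a := by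
        rw [← add_smul]; congr 1; ring
      rw [← mul_self_eq_zero, hmul _ (hK a ha _ (by positivity)), hdouble, ih]
  have hscale : Tendsto (fun k : ℕ => (2⁻¹ : ℝ) ^ k • a) atTop (𝓝[K] 0) :=
    tendsto_nhdsWithin_iff.2
      ⟨by simpa using (tendsto_pow_atTop_nhds_zero_of_lt_one (by norm_num)
          (by norm_num : (2⁻¹ : ℝ) < 1)).smul_const a,
        Eventually.of_forall fun k => hK a ha _ (by positivity)⟩
  have hlim := hcont.tendsto.comp hscale
  simp only [Function.comp_def, hhalf, tendsto_const_nhds_iff] at hlim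
  exact h0 hlim.symm

namespace Matrix

variable {n : Type*} [Fintype n]

noncomputable def absEntrySum (x : Matrix n n ℝ) : ℝ := ∑ i, ∑ j, |x i j|

lemma absEntrySum_nonneg (x : Matrix n n ℝ) : 0 ≤ absEntrySum x :=
  Finset.sum_nonneg fun _ _ => Finset.sum_nonneg fun _ _ => abs_nonneg _

@[fun_prop]
lemma continuous_absEntrySum : Continuous (absEntrySum (n := n)) := by
  unfold absEntrySum
  fun_prop

theorem IsHermitian.posSemidef_add_absEntrySum_smul_one [DecidableEq n] {x : Matrix n n ℝ}
    (hx : x.IsHermitian) : (x + absEntrySum x • 1).PosSemidef := by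
  refine .of_dotProduct_mulVec_nonneg
    (hx.add (PosSemidef.one.smul (absEntrySum_nonneg x)).isHermitian) fun v => ?_
  have hcoord : ∀ i, v i * v i ≤ v ⬝ᵥ v := fun i =>
    Finset.single_le_sum (f := fun j => v j * v j) (fun j _ => mul_self_nonneg _)
      (Finset.mem_univ i)
  have hentry : ∀ i j, -(|x i j| * (v ⬝ᵥ v)) ≤ v i * (x i j * v j) := by
    intro i j
    have hprod : |v i * v j| ≤ v ⬝ᵥ v := by
      rw [abs_mul]
      nlinarith [two_mul_le_add_sq |v i| |v j|, abs_mul_abs_self (v i), abs_mul_abs_self (v j),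
        hcoord i, hcoord j]
    calc -(|x i j| * (v ⬝ᵥ v)) ≤ -(|x i j| * |v i * v j|) := by gcongr
      _ = -|x i j * (v i * v j)| := by rw [abs_mul (x i j)]
      _ ≤ x i j * (v i * v j) := neg_abs_le _
      _ = v i * (x i j * v j) := by ring
  calc 0 ≤ ∑ i, ∑ j, (v i * (x i j * v j) + |x i j| * (v ⬝ᵥ v)) :=
        Finset.sum_nonneg fun i _ => Finset.sum_nonneg fun j _ => by linarith [hentry i j]
    _ = v ⬝ᵥ (x *ᵥ v) + absEntrySum x * (v ⬝ᵥ v) := by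
        simp only [Finset.sum_add_distrib, absEntrySum, Finset.sum_mul]
        congr 1
        simp [dotProduct, mulVec, Finset.mul_sum]
    _ = star v ⬝ᵥ ((x + absEntrySum x • 1) *ᵥ v) := by
        simp [add_mulVec, dotProduct_add, smul_mulVec, dotProduct_smul]

end Matrix

open Matrix

section PosSemidefExtension

variable {n : Type*} [Fintype n] [DecidableEq n] {ψ : Matrix n n ℝ → ℂ}

noncomputable def psdExtension (ψ : Matrix n n ℝ → ℂ) (x : Matrix n n ℝ) : ℂ :=
  ψ (x + absEntrySum x • 1) / ψ (absEntrySum x • 1)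

theorem psdExtension_eq
    (hmul : ∀ a b : Matrix n n ℝ, a.PosSemidef → b.PosSemidef → ψ a * ψ b = ψ (a + b))
    (hne : ∀ a : Matrix n n ℝ, a.PosSemidef → ψ a ≠ 0) {x : Matrix n n ℝ}
    (hx : x.IsHermitian) {c : ℝ} (hc : 0 ≤ c) (hxc : (x + c • 1).PosSemidef) :
    psdExtension ψ x = ψ (x + c • 1) / ψ (c • 1) := by
  have hc₀ := absEntrySum_nonneg x
  rw [psdExtension, div_eq_div_iff (hne _ (PosSemidef.one.smul hc₀))
      (hne _ (PosSemidef.one.smul hc)),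
    hmul _ _ hx.posSemidef_add_absEntrySum_smul_one (PosSemidef.one.smul hc),
    hmul _ _ hxc (PosSemidef.one.smul hc₀), add_right_comm]

theorem psdExtension_of_posSemidef
    (hmul : ∀ a b : Matrix n n ℝ, a.PosSemidef → b.PosSemidef → ψ a * ψ b = ψ (a + b))
    (hne : ∀ a : Matrix n n ℝ, a.PosSemidef → ψ a ≠ 0) (h0 : ψ 0 = 1) {a : Matrix n n ℝ}
    (ha : a.PosSemidef) : psdExtension ψ a = ψ a := by
  simpa [h0] using psdExtension_eq hmul hne ha.isHermitian le_rfl (by simpa using ha)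

theorem psdExtension_mul
    (hmul : ∀ a b : Matrix n n ℝ, a.PosSemidef → b.PosSemidef → ψ a * ψ b = ψ (a + b))
    (hne : ∀ a : Matrix n n ℝ, a.PosSemidef → ψ a ≠ 0) {x y : Matrix n n ℝ}
    (hx : x.IsHermitian) (hy : y.IsHermitian) :
    psdExtension ψ x * psdExtension ψ y = psdExtension ψ (x + y) := by
  have hxs := hx.posSemidef_add_absEntrySum_smul_one
  have hys := hy.posSemidef_add_absEntrySum_smul_one
  have hshift : x + y + (absEntrySum x + absEntrySum y) • (1 : Matrix n n ℝ) =
      x + absEntrySum x • 1 + (y + absEntrySum y • 1) := by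
    rw [add_smul, add_add_add_comm]
  rw [psdExtension_eq hmul hne (hx.add hy) (add_nonneg (absEntrySum_nonneg x)
      (absEntrySum_nonneg y)) (hshift ▸ hxs.add hys), hshift, add_smul, psdExtension,
    psdExtension, div_mul_div_comm, hmul _ _ hxs hys,
    hmul _ _ (PosSemidef.one.smul (absEntrySum_nonneg x))
      (PosSemidef.one.smul (absEntrySum_nonneg y))]

theorem continuousOn_psdExtension (hcont : ContinuousOn ψ {a | a.PosSemidef})
    (hne : ∀ a : Matrix n n ℝ, a.PosSemidef → ψ a ≠ 0) :
    ContinuousOn (psdExtension ψ) {x | x.IsHermitian} := by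
  have hshift : Continuous fun x : Matrix n n ℝ => absEntrySum x • (1 : Matrix n n ℝ) := by
    fun_prop
  refine ContinuousOn.div ?_ ?_ fun x _ => hne _ (PosSemidef.one.smul (absEntrySum_nonneg x))
  · exact hcont.comp (continuous_id.add hshift).continuousOn
      fun x hx => IsHermitian.posSemidef_add_absEntrySum_smul_one hx
  · exact hcont.comp hshift.continuousOn
      fun x _ => PosSemidef.one.smul (absEntrySum_nonneg x)

end PosSemidefExtension

/-- A continuous function `ψ` on the cone of real positive semidefinite
`q×q` matrices with `ψ 0 = 1` and `ψ a * ψ b = ψ (a + b)` is nowhere zero on the cone,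
and extends uniquely to a continuous multiplicative function `Ψ` on the space of all real
symmetric `q×q` matrices, via `Ψ (d − c•I) = ψ d / ψ (c•I)` for `d` psd and `c ≥ 0`. -/
theorem stmt2 (q : ℕ) (ψ : Matrix (Fin q) (Fin q) ℝ → ℂ)
    (hcont : ContinuousOn ψ {a | a.PosSemidef}) (h0 : ψ 0 = 1)
    (hmul : ∀ a b : Matrix (Fin q) (Fin q) ℝ,
      a.PosSemidef → b.PosSemidef → ψ a * ψ b = ψ (a + b)) :
    (∀ a : Matrix (Fin q) (Fin q) ℝ, a.PosSemidef → ψ a ≠ 0) ∧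
      ∃! Ψ : {x : Matrix (Fin q) (Fin q) ℝ // x.IsHermitian} → ℂ,
        Continuous Ψ ∧
        (∀ x y : {x : Matrix (Fin q) (Fin q) ℝ // x.IsHermitian},
          Ψ x * Ψ y = Ψ ⟨x.1 + y.1, x.2.add y.2⟩) ∧
        (∀ (a : Matrix (Fin q) (Fin q) ℝ) (ha : a.PosSemidef),
          Ψ ⟨a, ha.isHermitian⟩ = ψ a) ∧
        (∀ (d : Matrix (Fin q) (Fin q) ℝ) (hd : d.PosSemidef) (c : ℝ), 0 ≤ c →
          Ψ ⟨d - c • (1 : Matrix (Fin q) (Fin q) ℝ),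
              hd.isHermitian.sub (by simp [Matrix.IsHermitian, Matrix.conjTranspose_smul])⟩
            = ψ d / ψ (c • (1 : Matrix (Fin q) (Fin q) ℝ))) := by
  have hne : ∀ a : Matrix (Fin q) (Fin q) ℝ, a.PosSemidef → ψ a ≠ 0 := fun a ha =>
    apply_ne_zero_of_mul_self_eq_apply_add (fun b hb t ht => hb.smul ht) (hcont 0 .zero)
      (by simp [h0]) (fun b hb => hmul b b hb hb) ha
  refine ⟨hne, fun x => psdExtension ψ x.1, ⟨?_, fun x y => psdExtension_mul hmul hne x.2 y.2,
    fun a ha => psdExtension_of_posSemidef hmul hne h0 ha, fun d hd c hc => ?_⟩, ?_⟩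
  · exact (continuousOn_psdExtension hcont hne).comp_continuous continuous_subtype_val
      Subtype.property
  · show psdExtension ψ _ = _
    rw [psdExtension_eq hmul hne (hd.isHermitian.sub (PosSemidef.one.smul hc).isHermitian) hc (by rwa [sub_add_cancel]), sub_add_cancel]
  · rintro Ψ ⟨-, -, -, hformula⟩
    funext x
    rw [psdExtension, ← hformula _ x.2.posSemidef_add_absEntrySum_smul_one _
      (absEntrySum_nonneg x.1)]
    congr 1
    exact Subtype.ext (add_sub_cancel_right _ _).symm
end

section
/- For q = 1 (the scalar case), the Bessel function J_μ(z) = Σ_{k≥0} (−1)^k z^k / ((μ)_k k!) satisfies lim_{μ→∞} J_μ(μ y) = e^{−y} uniformly for y in [0, ∞); moreover there is a constant C > 0 with |J_μ(μy) − e^{−y}| ≤ C/μ for all y ≥ 0 and μ ≥ 2. -/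
/-!
Termwise differentiation gives `J_ν' = -J_{ν+1} / ν`, and comparing coefficients gives the
contiguous relation `x J_{ν+2}(x) = ν (ν + 1) (J_{ν+1}(x) - J_ν(x))`. Together they give
`(e^{x/ν} J_ν(x))' = -e^{x/ν} x J_{ν+2}(x) / (ν² (ν + 1))`, so
`|J_ν(x) - e^{-x/ν}| ≤ M / (ν (ν + 1))` as soon as `t |J_{ν+2}(t)| ≤ M` on `[0, x]`. By the same two
identities the energy `J_ν² + x (J_{ν+1} / ν)²` has derivative `(1 - 2ν) (J_{ν+1} / ν)² ≤ 0`, so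
`|J_ν| ≤ 1` on `[0, ∞)`. Feeding this into the comparison, and then feeding the resulting estimate
back once more, gives `|J_ν(x) - e^{-x/ν}| ≤ 2 / ν + x² / ν⁴`, which is `O(1 / ν)` at `x = ν y` for
`y ≤ 2 log ν`. For larger `y` we have `e^{-y} ≤ 1 / ν²`, and `J_ν(ν y)²` is bounded by the energy at
`2 ν log ν`, which is `O(1 / ν²)` because there both `J_ν` and `J_{ν+1}` are already `O(1 / ν)`.
-/

open Filter Topology

/-- The one-variable Bessel series `J_μ(z) = Σ_{k≥0} (−1)^k z^k / ((μ)_k k!)`. -/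
noncomputable def besselJ1 (μ : ℝ) (z : ℝ) : ℝ :=
  ∑' k : ℕ, (-1 : ℝ) ^ k * z ^ k / ((ascPochhammer ℝ k).eval μ * (k.factorial : ℝ))

open Set Real
open scoped Nat

theorem tendstoUniformlyOn_of_dist_le {ι α β : Type*} [PseudoMetricSpace β] {p : Filter ι}
    {F : ι → α → β} {f : α → β} {s : Set α} {b : ι → ℝ} (hb : Tendsto b p (𝓝 0))
    (h : ∀ᶠ i in p, ∀ x ∈ s, dist (f x) (F i x) ≤ b i) : TendstoUniformlyOn F f p s :=
  Metric.tendstoUniformlyOn_iff.2 fun _ hε =>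
    (h.and (hb.eventually (gt_mem_nhds hε))).mono fun _ hi x hx => (hi.1 x hx).trans_lt hi.2

theorem sq_log_le_four_mul {x : ℝ} (hx : 1 ≤ x) : log x ^ 2 ≤ 4 * x := by
  have h := log_le_rpow_div (x := x) (by linarith) (by norm_num : (0 : ℝ) < 1 / 2)
  rw [← sqrt_eq_rpow] at h
  calc log x ^ 2 ≤ (√x / (1 / 2)) ^ 2 := pow_le_pow_left₀ (log_nonneg hx) h 2
    _ = 4 * x := by rw [div_pow, sq_sqrt (by linarith)]; ring

theorem exp_neg_le_inv_of_log_le {a y : ℝ} (ha : 0 < a) (hy : log a ≤ y) : exp (-y) ≤ a⁻¹ := by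
  rw [← exp_log ha, ← exp_neg]
  exact exp_le_exp.2 (neg_le_neg hy)

theorem mul_exp_neg_div_le {t c : ℝ} (hc : 0 < c) : t * exp (-(t / c)) ≤ c := by
  rw [exp_neg, ← div_eq_mul_inv, div_le_iff₀ (exp_pos _)]
  have := add_one_le_exp (t / c)
  rw [div_add_one hc.ne', div_le_iff₀ hc] at this
  nlinarith [exp_pos (t / c)]

theorem summable_mul_pow_of_abs_le_inv_factorial {a : ℕ → ℝ} (ha : ∀ k, |a k| ≤ (k ! : ℝ)⁻¹)
    (x : ℝ) : Summable fun k => a k * x ^ k :=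
  (Real.summable_pow_div_factorial |x|).of_norm_bounded fun k => by
    rw [Real.norm_eq_abs, abs_mul, abs_pow, div_eq_inv_mul]
    exact mul_le_mul_of_nonneg_right (ha k) (by positivity)

theorem hasDerivAt_tsum_mul_pow_of_abs_le_inv_factorial {a : ℕ → ℝ}
    (ha : ∀ k, |a k| ≤ (k ! : ℝ)⁻¹) (x : ℝ) :
    HasDerivAt (fun y => ∑' k, a k * y ^ k) (∑' k, (k + 1) * a (k + 1) * x ^ k) x := by
  set R := |x| + 1
  have hR : 1 ≤ R := le_add_of_nonneg_left (abs_nonneg x)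
  have hbound : ∀ k, ∀ y ∈ Metric.ball (0 : ℝ) R,
      ‖a k * (k * y ^ (k - 1))‖ ≤ (2 * R) ^ k / k ! := by
    intro k y hy
    have hy : |y| ≤ R := (mem_ball_zero_iff.1 hy).le
    have hk : (k : ℝ) ≤ 2 ^ k := by exact_mod_cast Nat.lt_two_pow_self.le
    have hpow : |y| ^ (k - 1) ≤ R ^ k :=
      (pow_le_pow_left₀ (abs_nonneg y) hy _).trans (pow_le_pow_right₀ hR (Nat.sub_le k 1))
    rw [Real.norm_eq_abs, abs_mul, abs_mul, abs_pow, Nat.abs_cast, div_eq_inv_mul, mul_pow]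
    gcongr
    exact ha k
  have hderiv := hasDerivAt_tsum_of_isPreconnected (Real.summable_pow_div_factorial (2 * R))
    Metric.isOpen_ball (convex_ball (0 : ℝ) R).isPreconnected
    (fun k y _ => (hasDerivAt_pow k y).const_mul (a k)) hbound
    (Metric.mem_ball_self (by positivity)) (summable_mul_pow_of_abs_le_inv_factorial ha 0)
    (mem_ball_zero_iff.2 (lt_add_one _))
  have hsum : Summable fun k => a k * (k * x ^ (k - 1)) :=
    (Real.summable_pow_div_factorial (2 * R)).of_norm_bounded
      fun k => hbound k x (mem_ball_zero_iff.2 (lt_add_one _))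
  refine hderiv.congr_deriv ?_
  rw [hsum.tsum_eq_zero_add]
  simp only [CharP.cast_eq_zero, zero_mul, mul_zero, zero_add, Nat.add_sub_cancel, Nat.cast_add,
    Nat.cast_one]
  exact tsum_congr fun k => by ring

theorem one_le_ascPochhammer_eval {ν : ℝ} (hν : 1 ≤ ν) (k : ℕ) :
    1 ≤ (ascPochhammer ℝ k).eval ν := by
  induction k with
  | zero => simp
  | succ k ih =>
    rw [ascPochhammer_succ_eval]
    nlinarith [(Nat.cast_nonneg k : (0 : ℝ) ≤ k)]

theorem ascPochhammer_succ_left_eval (ν : ℝ) (k : ℕ) :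
    (ascPochhammer ℝ (k + 1)).eval ν = ν * (ascPochhammer ℝ k).eval (ν + 1) := by
  simp [ascPochhammer_succ_left, Polynomial.eval_comp]

section Bessel

variable {ν : ℝ}

noncomputable def besselCoeff (ν : ℝ) (k : ℕ) : ℝ :=
  (-1) ^ k / ((ascPochhammer ℝ k).eval ν * k !)

theorem besselJ1_eq_tsum (ν x : ℝ) : besselJ1 ν x = ∑' k, besselCoeff ν k * x ^ k :=
  tsum_congr fun k => by rw [besselCoeff, div_mul_eq_mul_div]

theorem abs_besselCoeff_le (hν : 1 ≤ ν) (k : ℕ) : |besselCoeff ν k| ≤ (k ! : ℝ)⁻¹ := by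
  have h1 := one_le_ascPochhammer_eval hν k
  have hk : (0 : ℝ) < k ! := by positivity
  rw [besselCoeff, abs_div, abs_pow, abs_neg, abs_one, one_pow,
    abs_of_pos (by positivity), one_div]
  exact inv_anti₀ hk (le_mul_of_one_le_left hk.le h1)

theorem succ_mul_besselCoeff_succ (hν : 0 < ν) (k : ℕ) :
    (k + 1) * besselCoeff ν (k + 1) = -besselCoeff (ν + 1) k / ν := by
  have := ascPochhammer_pos k (ν + 1) (by linarith)
  rw [besselCoeff, besselCoeff, ascPochhammer_succ_left_eval, Nat.factorial_succ]
  push_cast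
  field_simp
  ring

theorem besselCoeff_add_two (hν : 0 < ν) (k : ℕ) :
    besselCoeff (ν + 2) k =
      ν * (ν + 1) * (besselCoeff (ν + 1) (k + 1) - besselCoeff ν (k + 1)) := by
  have h1 := ascPochhammer_pos k (ν + 1) (by linarith)
  have h2 := ascPochhammer_pos k (ν + 2) (by linarith)
  have hleft : (ascPochhammer ℝ (k + 1)).eval (ν + 1) =
      (ν + 1) * (ascPochhammer ℝ k).eval (ν + 2) := by
    rw [ascPochhammer_succ_left_eval]; ring_nf
  have hright : (ascPochhammer ℝ (k + 1)).eval (ν + 1) =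
      (ascPochhammer ℝ k).eval (ν + 1) * (ν + 1 + k) :=
    ascPochhammer_succ_eval k (ν + 1)
  rw [besselCoeff, besselCoeff, besselCoeff, ascPochhammer_succ_left_eval ν, Nat.factorial_succ]
  rw [hleft] at hright ⊢
  push_cast
  field_simp
  linear_combination -(-1) ^ k * hright

theorem summable_besselCoeff_mul_pow (hν : 1 ≤ ν) (x : ℝ) :
    Summable fun k => besselCoeff ν k * x ^ k :=
  summable_mul_pow_of_abs_le_inv_factorial (abs_besselCoeff_le hν) x

theorem besselJ1_zero (ν : ℝ) : besselJ1 ν 0 = 1 := by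
  rw [besselJ1_eq_tsum, tsum_eq_single 0 fun k hk => by simp [zero_pow hk]]
  simp [besselCoeff]

theorem hasDerivAt_besselJ1 (hν : 1 ≤ ν) (x : ℝ) :
    HasDerivAt (besselJ1 ν) (-besselJ1 (ν + 1) x / ν) x := by
  rw [show besselJ1 ν = fun y => ∑' k, besselCoeff ν k * y ^ k from funext (besselJ1_eq_tsum ν)]
  refine (hasDerivAt_tsum_mul_pow_of_abs_le_inv_factorial (abs_besselCoeff_le hν) x).congr_deriv ?_
  simp_rw [succ_mul_besselCoeff_succ (by linarith : 0 < ν), besselJ1_eq_tsum, ← tsum_neg,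
    ← tsum_div_const]
  exact tsum_congr fun k => by ring

theorem mul_besselJ1_add_two (hν : 1 ≤ ν) (x : ℝ) :
    x * besselJ1 (ν + 2) x = ν * (ν + 1) * (besselJ1 (ν + 1) x - besselJ1 ν x) := by
  have h1 := summable_besselCoeff_mul_pow (by linarith : 1 ≤ ν + 1) x
  have h0 := summable_besselCoeff_mul_pow hν x
  rw [besselJ1_eq_tsum, besselJ1_eq_tsum, besselJ1_eq_tsum, ← h1.tsum_sub h0, ← tsum_mul_left,
    ← tsum_mul_left, ((h1.sub h0).mul_left _).tsum_eq_zero_add]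
  rw [show besselCoeff (ν + 1) 0 = besselCoeff ν 0 by simp [besselCoeff], sub_self, mul_zero,
    zero_add]
  refine tsum_congr fun k => ?_
  rw [besselCoeff_add_two (by linarith) k, besselCoeff, besselCoeff]
  ring

theorem hasDerivAt_exp_div_mul_besselJ1 (hν : 1 ≤ ν) (t : ℝ) :
    HasDerivAt (fun s => exp (s / ν) * besselJ1 ν s)
      (-(exp (t / ν) * t * besselJ1 (ν + 2) t) / (ν ^ 2 * (ν + 1))) t := by
  have hν0 : 0 < ν := by linarith
  refine ((((hasDerivAt_id' t).div_const ν).exp).mul (hasDerivAt_besselJ1 hν t)).congr_deriv ?_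
  have := mul_besselJ1_add_two hν t
  field_simp
  linear_combination this

theorem abs_besselJ1_sub_exp_le_of_forall_le (hν : 1 ≤ ν) {x M : ℝ} (hx : 0 ≤ x)
    (hM : ∀ t ∈ Icc 0 x, t * |besselJ1 (ν + 2) t| ≤ M) :
    |besselJ1 ν x - exp (-(x / ν))| ≤ M / (ν * (ν + 1)) := by
  have hν0 : 0 < ν := by linarith
  set c := M / (ν * (ν + 1)) with hc_def
  have hc : 0 ≤ c := div_nonneg (by simpa using hM 0 ⟨le_rfl, hx⟩) (by positivity)
  have hF t := (hasDerivAt_exp_div_mul_besselJ1 hν t).sub_const 1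
  have hB t := (((hasDerivAt_id' t).div_const ν).exp).const_mul c
  have hF'_le : ∀ t ∈ Ico 0 x,
      ‖-(exp (t / ν) * t * besselJ1 (ν + 2) t) / (ν ^ 2 * (ν + 1))‖ ≤
        c * (exp (t / ν) * (1 / ν)) := by
    intro t ht
    rw [Real.norm_eq_abs, abs_div, abs_neg, abs_of_pos (by positivity : 0 < ν ^ 2 * (ν + 1)),
      abs_mul, abs_mul, abs_of_pos (exp_pos _), abs_of_nonneg ht.1, mul_assoc]
    calc exp (t / ν) * (t * |besselJ1 (ν + 2) t|) / (ν ^ 2 * (ν + 1))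
        ≤ exp (t / ν) * M / (ν ^ 2 * (ν + 1)) := by gcongr; exact hM t (Ico_subset_Icc_self ht)
      _ = c * (exp (t / ν) * (1 / ν)) := by rw [hc_def]; field_simp
  have hbound : ‖exp (x / ν) * besselJ1 ν x - 1‖ ≤ c * exp (x / ν) :=
    image_norm_le_of_norm_deriv_right_le_deriv_boundary
      (fun t _ => (hF t).continuousAt.continuousWithinAt) (fun t _ => (hF t).hasDerivWithinAt)
      (by simpa [besselJ1_zero] using hc) hB hF'_le ⟨hx, le_rfl⟩
  calc |besselJ1 ν x - exp (-(x / ν))| = exp (-(x / ν)) * ‖exp (x / ν) * besselJ1 ν x - 1‖ := by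
        rw [Real.norm_eq_abs, ← abs_of_pos (exp_pos (-(x / ν))), ← abs_mul, mul_sub, ← mul_assoc,
          ← exp_add, neg_add_cancel, exp_zero, one_mul, mul_one, abs_of_pos (exp_pos _)]
    _ ≤ exp (-(x / ν)) * (c * exp (x / ν)) := by gcongr
    _ = c := by rw [mul_left_comm, ← exp_add, neg_add_cancel, exp_zero, mul_one]

noncomputable def besselEnergy (ν x : ℝ) : ℝ :=
  besselJ1 ν x ^ 2 + x * (besselJ1 (ν + 1) x / ν) ^ 2

theorem hasDerivAt_besselEnergy (hν : 1 ≤ ν) (x : ℝ) :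
    HasDerivAt (besselEnergy ν) ((1 - 2 * ν) * (besselJ1 (ν + 1) x / ν) ^ 2) x := by
  have hν0 : 0 < ν := by linarith
  have h := ((hasDerivAt_besselJ1 hν x).pow 2).add ((hasDerivAt_id' x).mul
    (((hasDerivAt_besselJ1 (by linarith : 1 ≤ ν + 1) x).div_const ν).pow 2))
  rw [show ν + 1 + 1 = ν + 2 by ring] at h
  refine h.congr_deriv ?_
  have := mul_besselJ1_add_two hν x
  simp only [Pi.pow_apply, Nat.cast_ofNat, Nat.add_one_sub_one, pow_one, one_mul]
  field_simp
  linear_combination (-2 * besselJ1 (ν + 1) x) * this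

theorem besselEnergy_antitone (hν : 1 ≤ ν) : Antitone (besselEnergy ν) :=
  antitone_of_deriv_nonpos (fun x => (hasDerivAt_besselEnergy hν x).differentiableAt) fun x => by
    rw [(hasDerivAt_besselEnergy hν x).deriv]
    exact mul_nonpos_of_nonpos_of_nonneg (by linarith) (sq_nonneg _)

theorem besselEnergy_zero (ν : ℝ) : besselEnergy ν 0 = 1 := by
  simp [besselEnergy, besselJ1_zero]

theorem sq_besselJ1_le_besselEnergy {x : ℝ} (hx : 0 ≤ x) : besselJ1 ν x ^ 2 ≤ besselEnergy ν x :=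
  le_add_of_nonneg_right (by positivity)

theorem abs_besselJ1_le_one (hν : 1 ≤ ν) {x : ℝ} (hx : 0 ≤ x) : |besselJ1 ν x| ≤ 1 := by
  refine abs_le_of_sq_le_sq ?_ zero_le_one
  calc besselJ1 ν x ^ 2 ≤ besselEnergy ν x := sq_besselJ1_le_besselEnergy hx
    _ ≤ besselEnergy ν 0 := besselEnergy_antitone hν hx
    _ = 1 ^ 2 := by rw [besselEnergy_zero, one_pow]

theorem abs_besselJ1_sub_exp_le_div_sq (hν : 1 ≤ ν) {x : ℝ} (hx : 0 ≤ x) :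
    |besselJ1 ν x - exp (-(x / ν))| ≤ x / ν ^ 2 := by
  refine (abs_besselJ1_sub_exp_le_of_forall_le hν hx (M := x) fun t ht => ?_).trans ?_
  · nlinarith [abs_besselJ1_le_one (by linarith : 1 ≤ ν + 2) ht.1, abs_nonneg (besselJ1 (ν + 2) t),
      ht.1, ht.2]
  · exact div_le_div_of_nonneg_left hx (by positivity) (by nlinarith)

theorem abs_besselJ1_sub_exp_le_two_div_add (hν : 1 ≤ ν) {x : ℝ} (hx : 0 ≤ x) :
    |besselJ1 ν x - exp (-(x / ν))| ≤ 2 / ν + x ^ 2 / ν ^ 4 := by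
  have hν0 : 0 < ν := by linarith
  refine (abs_besselJ1_sub_exp_le_of_forall_le hν hx (M := ν + 2 + x ^ 2 / ν ^ 2)
    fun t ht => ?_).trans ?_
  · have hJ : |besselJ1 (ν + 2) t| ≤ exp (-(t / (ν + 2))) + t / (ν + 2) ^ 2 := by
      have := abs_besselJ1_sub_exp_le_div_sq (by linarith : 1 ≤ ν + 2) ht.1
      rw [abs_le] at this ⊢
      constructor <;> nlinarith [exp_pos (-(t / (ν + 2)))]
    have ht2 : t ^ 2 / (ν + 2) ^ 2 ≤ x ^ 2 / ν ^ 2 :=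
      div_le_div₀ (sq_nonneg x) (pow_le_pow_left₀ ht.1 ht.2 2) (by positivity) (by nlinarith)
    calc t * |besselJ1 (ν + 2) t| ≤ t * (exp (-(t / (ν + 2))) + t / (ν + 2) ^ 2) :=
          mul_le_mul_of_nonneg_left hJ ht.1
      _ = t * exp (-(t / (ν + 2))) + t ^ 2 / (ν + 2) ^ 2 := by ring
      _ ≤ ν + 2 + x ^ 2 / ν ^ 2 := add_le_add (mul_exp_neg_div_le (by linarith)) ht2
  · rw [add_div, div_div]
    exact add_le_add (by rw [div_le_div_iff₀ (by positivity) hν0]; nlinarith)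
      (div_le_div_of_nonneg_left (sq_nonneg x) (by positivity) (by nlinarith))

theorem abs_besselJ1_mul_sub_exp_le_of_le_two_log (hν : 1 ≤ ν) {y : ℝ} (hy : 0 ≤ y)
    (hyL : y ≤ 2 * log ν) : |besselJ1 ν (ν * y) - exp (-y)| ≤ 18 / ν := by
  have hν0 : 0 < ν := by linarith
  have hy2 : y ^ 2 ≤ 16 * ν := by
    nlinarith [pow_le_pow_left₀ hy hyL 2, sq_log_le_four_mul hν]
  have h := abs_besselJ1_sub_exp_le_two_div_add hν (mul_nonneg hν0.le hy)
  rw [mul_div_cancel_left₀ y hν0.ne'] at h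
  calc _ ≤ 2 / ν + (ν * y) ^ 2 / ν ^ 4 := h
    _ = 2 / ν + y ^ 2 / ν ^ 2 := by field_simp
    _ ≤ 18 / ν := by
      rw [div_add_div _ _ hν0.ne' (by positivity), div_le_div_iff₀ (by positivity) hν0]
      nlinarith

theorem abs_besselJ1_mul_le_of_two_log_le (hν : 1 ≤ ν) {y : ℝ} (hyL : 2 * log ν ≤ y) :
    |besselJ1 ν (ν * y)| ≤ 33 / ν := by
  have hν0 : 0 < ν := by linarith
  set L := log ν
  have hL0 : 0 ≤ L := log_nonneg hν
  have hLν : L ≤ ν := log_le_self hν0.le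
  have hL2 : L ^ 2 ≤ 4 * ν := sq_log_le_four_mul hν
  set x₀ := ν * (2 * L)
  have hJ : |besselJ1 ν x₀| ≤ 19 / ν := by
    have h : |besselJ1 ν x₀ - exp (-(2 * L))| ≤ 18 / ν :=
      abs_besselJ1_mul_sub_exp_le_of_le_two_log hν (by positivity) le_rfl
    have he := exp_neg_le_inv_of_log_le hν0 (by linarith : L ≤ 2 * L)
    rw [abs_le] at h ⊢
    have : 19 / ν = 18 / ν + ν⁻¹ := by ring
    constructor <;> linarith [exp_pos (-(2 * L)), inv_pos.2 hν0]
  have hJ1 : |besselJ1 (ν + 1) x₀| ≤ 19 / ν := by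
    have h := abs_besselJ1_sub_exp_le_two_div_add (by linarith : 1 ≤ ν + 1) (x := x₀)
      (by positivity)
    have he := exp_neg_le_inv_of_log_le hν0 (y := x₀ / (ν + 1))
      (by rw [le_div_iff₀ (by linarith)]; nlinarith)
    have h2 : 2 / (ν + 1) ≤ 2 / ν := div_le_div_of_nonneg_left (by norm_num) hν0 (by linarith)
    have h3 : x₀ ^ 2 / (ν + 1) ^ 4 ≤ 16 / ν := by
      rw [div_le_div_iff₀ (by positivity) hν0]
      nlinarith [pow_le_pow_left₀ hν0.le (le_add_of_nonneg_right zero_le_one : ν ≤ ν + 1) 4]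
    rw [abs_le] at h ⊢
    have : 19 / ν = ν⁻¹ + 2 / ν + 16 / ν := by ring
    constructor <;> linarith [exp_pos (-(x₀ / (ν + 1))), inv_pos.2 hν0]
  have hE : besselEnergy ν x₀ ≤ (33 / ν) ^ 2 := by
    have hJ' := pow_le_pow_left₀ (abs_nonneg _) hJ 2
    have hJ1' := pow_le_pow_left₀ (abs_nonneg _) hJ1 2
    rw [sq_abs] at hJ' hJ1'
    have hx₀ : x₀ / ν ^ 2 ≤ 2 := by rw [div_le_iff₀ (by positivity)]; nlinarith
    calc besselEnergy ν x₀ = besselJ1 ν x₀ ^ 2 + x₀ / ν ^ 2 * besselJ1 (ν + 1) x₀ ^ 2 := by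
          rw [besselEnergy]; ring
      _ ≤ (19 / ν) ^ 2 + 2 * (19 / ν) ^ 2 := by gcongr
      _ ≤ (33 / ν) ^ 2 := by rw [← sub_nonneg]; ring_nf; positivity
  refine abs_le_of_sq_le_sq ?_ (by positivity)
  calc besselJ1 ν (ν * y) ^ 2 ≤ besselEnergy ν (ν * y) :=
        sq_besselJ1_le_besselEnergy (mul_nonneg hν0.le (by linarith))
    _ ≤ besselEnergy ν x₀ := besselEnergy_antitone hν (mul_le_mul_of_nonneg_left hyL hν0.le)
    _ ≤ (33 / ν) ^ 2 := hE

theorem abs_besselJ1_mul_sub_exp_le (hν : 1 ≤ ν) {y : ℝ} (hy : 0 ≤ y) :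
    |besselJ1 ν (ν * y) - exp (-y)| ≤ 34 / ν := by
  rcases le_total y (2 * log ν) with hyL | hyL
  · exact (abs_besselJ1_mul_sub_exp_le_of_le_two_log hν hy hyL).trans
      (div_le_div_of_nonneg_right (by norm_num) (by linarith))
  · have he := exp_neg_le_inv_of_log_le (by linarith) (by linarith [log_nonneg hν] : log ν ≤ y)
    calc |besselJ1 ν (ν * y) - exp (-y)| ≤ |besselJ1 ν (ν * y)| + |exp (-y)| := abs_sub _ _
      _ ≤ 33 / ν + 1 / ν := by
        rw [abs_of_pos (exp_pos _), one_div]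
        exact add_le_add (abs_besselJ1_mul_le_of_two_log_le hν hyL) he
      _ = 34 / ν := by ring

end Bessel

/-- In the scalar case `q = 1`, `J_μ(μ y) → e^{−y}` as `μ → ∞`, uniformly
for `y ∈ [0,∞)`; moreover there is `C > 0` with `|J_μ(μy) − e^{−y}| ≤ C/μ` for all
`y ≥ 0` and `μ ≥ 2`. -/
theorem stmt12 :
    TendstoUniformlyOn (fun (μ : ℝ) (y : ℝ) => besselJ1 μ (μ * y))
        (fun y => Real.exp (-y)) atTop (Set.Ici (0 : ℝ)) ∧
      ∃ C : ℝ, 0 < C ∧ ∀ μ : ℝ, 2 ≤ μ → ∀ y : ℝ, 0 ≤ y →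
        |besselJ1 μ (μ * y) - Real.exp (-y)| ≤ C / μ := by
  refine ⟨tendstoUniformlyOn_of_dist_le (b := fun μ => 34 / μ)
    (tendsto_const_nhds.div_atTop tendsto_id) ?_, 34, by norm_num,
    fun μ hμ y hy => abs_besselJ1_mul_sub_exp_le (by linarith) hy⟩
  filter_upwards [eventually_ge_atTop 1] with μ hμ y hy
  rw [dist_comm, Real.dist_eq]
  exact abs_besselJ1_mul_sub_exp_le hμ hy
end

section
/- For a partition λ = (λ₁ ≥ … ≥ λ_q ≥ 0) and real μ, define the generalized Pochhammer symbol (μ)_λ^α = ∏_{j=1}^q (μ − (j−1)/α)_{λ_j}. Then for α = 2/d with d ∈ {1,2,4} and μ ≥ 2q, the bound |1 − μ^{|λ|}/(μ)_λ| ≤ dq·2^{dq(q−1)/2}·|λ|²/μ holds, where |λ| = λ₁+⋯+λ_q and (x)_m is the rising factorial. -/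
open Finset

lemma ascPochhammer_eval_prod (n : ℕ) (x : ℝ) :
    (ascPochhammer ℝ n).eval x = ∏ k ∈ range n, (x + k) := by
  induction n with
  | zero => simp
  | succ n ih => rw [ascPochhammer_succ_eval, prod_range_succ, ih]

lemma aux_exp (a : ℕ) (b : ℝ) (ha : 1 ≤ a) (hab : (a : ℝ) ≤ b) :
    (b + 1) ^ a ≤ 4 * b ^ a := by
  have ha0 : (0:ℝ) < a := by exact_mod_cast ha
  have hb0 : (0:ℝ) < b := lt_of_lt_of_le ha0 hab
  have h1 : b + 1 ≤ b * ((a + 1) / a) := by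
    rw [mul_div_assoc', le_div_iff₀ ha0]
    nlinarith
  have h2 : (b + 1) ^ a ≤ (b * ((a + 1) / a)) ^ a := by
    apply pow_le_pow_left₀ (by linarith) h1
  have h3 : ((a:ℝ) + 1) / a = 1 + 1 / a := by field_simp
  have h4 : ((1:ℝ) + 1 / a) ^ a ≤ Real.exp (1 / a) ^ a := by
    apply pow_le_pow_left₀ (by positivity)
    have := Real.add_one_le_exp (1 / (a:ℝ))
    linarith
  have h5 : Real.exp (1 / (a:ℝ)) ^ a = Real.exp 1 := by
    rw [← Real.exp_nat_mul]
    congr 1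
    field_simp
  have h6 : Real.exp 1 < 4 := by
    have := Real.exp_one_lt_d9
    linarith
  calc (b + 1) ^ a ≤ (b * ((a + 1) / a)) ^ a := h2
    _ = b ^ a * ((1 + 1/(a:ℝ)) ^ a) := by rw [mul_pow, h3]
    _ ≤ b ^ a * Real.exp 1 := by
        apply mul_le_mul_of_nonneg_left _ (by positivity)
        calc ((1:ℝ) + 1 / a) ^ a ≤ Real.exp (1 / a) ^ a := h4
          _ = Real.exp 1 := h5
    _ ≤ 4 * b ^ a := by nlinarith [pow_pos hb0 a]

lemma aux_fact (m : ℕ) (hm : 1 ≤ m) :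
    2 * ((m : ℝ) + 2) ^ m ≤ 4 ^ m * ∏ k ∈ range m, ((k : ℝ) + 2) := by
  induction m with
  | zero => omega
  | succ m ih =>
    rcases Nat.eq_zero_or_pos m with h0 | h0
    · subst h0; norm_num
    · have ih' := ih h0
      rw [prod_range_succ]
      have hkey : ((m:ℝ) + 1 + 2) ^ (m+1) ≤ 4 * ((m:ℝ) + 2) ^ (m+1) := by
        have := aux_exp (m+1) ((m:ℝ) + 2) (by omega) (by push_cast; linarith)
        calc ((m:ℝ) + 1 + 2) ^ (m+1) = (((m:ℝ)+2) + 1) ^ (m+1) := by ring_nf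
          _ ≤ 4 * ((m:ℝ) + 2) ^ (m+1) := this
      have hP : (0:ℝ) ≤ ∏ k ∈ range m, ((k : ℝ) + 2) :=
        prod_nonneg fun k _ => by positivity
      push_cast
      calc 2 * ((m:ℝ) + 1 + 2) ^ (m+1) ≤ 2 * (4 * ((m:ℝ) + 2) ^ (m+1)) := by nlinarith
        _ = 4 * (((m:ℝ)+2) * (2 * ((m:ℝ)+2)^m)) := by ring
        _ ≤ 4 * (((m:ℝ)+2) * (4 ^ m * ∏ k ∈ range m, ((k : ℝ) + 2))) := by
            apply mul_le_mul_of_nonneg_left _ (by norm_num)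
            apply mul_le_mul_of_nonneg_left ih' (by positivity)
        _ = 4 ^ (m+1) * ((∏ k ∈ range m, ((k : ℝ) + 2)) * ((m:ℝ) + 2)) := by
            push_cast; ring


lemma aux_core (m : ℕ) (hm : 1 ≤ m) (μ : ℝ) (hμ : (m : ℝ) + 2 ≤ μ) :
    2 * μ ^ m ≤ 4 ^ m * ∏ k ∈ range m, (μ - m + k) := by
  have hμ0 : (0:ℝ) < μ := by
    have : (0:ℝ) < (m:ℝ) + 2 := by positivity
    linarith
  have hpt : ∀ k ∈ range m, μ * ((k:ℝ) + 2) ≤ (μ - m + k) * ((m:ℝ) + 2) := by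
    intro k hk
    have hk' : (k:ℝ) ≤ (m:ℝ) - 1 := by
      have : k + 1 ≤ m := mem_range.1 hk
      have := Nat.cast_le (α := ℝ) |>.2 this
      push_cast at this; linarith
    nlinarith
  have hprod : ∏ k ∈ range m, (μ * ((k:ℝ) + 2)) ≤
      ∏ k ∈ range m, ((μ - m + k) * ((m:ℝ) + 2)) := by
    apply prod_le_prod (fun k _ => by positivity) hpt
  rw [prod_mul_distrib, prod_mul_distrib, prod_const, prod_const, card_range] at hprod
  have hF : (0:ℝ) < ∏ k ∈ range m, ((k : ℝ) + 2) := prod_pos fun k _ => by positivity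
  have hP : (0:ℝ) ≤ ∏ k ∈ range m, (μ - m + k) := by
    apply prod_nonneg
    intro k _
    have : (0:ℝ) ≤ (k:ℝ) := Nat.cast_nonneg k
    linarith
  have hfact := aux_fact m hm
  have hμm : (0:ℝ) ≤ μ ^ m := by positivity
  have h4 : (0:ℝ) < 4 ^ m := by positivity
  have hm2 : (0:ℝ) < ((m:ℝ) + 2) ^ m := by positivity
  -- hprod : μ^m * ∏(k+2) ≤ ∏(μ-m+k) * (m+2)^m
  nlinarith [mul_le_mul_of_nonneg_left hfact hP,
    mul_le_mul_of_nonneg_left hprod (le_of_lt (by norm_num : (0:ℝ) < 2))]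


lemma aux_telescope {ι : Type*} (s : Finset ι) (t : ι → ℝ) (ht : ∀ i ∈ s, 0 ≤ t i) :
    |1 - ∏ i ∈ s, t i| ≤ (∑ i ∈ s, |1 - t i|) * ∏ i ∈ s, max 1 (t i) := by
  induction s using Finset.cons_induction with
  | empty => simp
  | cons a s ha ih =>
    rw [prod_cons, sum_cons, prod_cons]
    have hta : 0 ≤ t a := ht a (mem_cons_self a s)
    have hts : ∀ i ∈ s, 0 ≤ t i := fun i hi => ht i (mem_cons.2 (Or.inr hi))
    have ihs := ih hts
    have hM : (1:ℝ) ≤ ∏ i ∈ s, max 1 (t i) := by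
      calc (1:ℝ) = ∏ _i ∈ s, 1 := by simp
        _ ≤ ∏ i ∈ s, max 1 (t i) := prod_le_prod (by simp) (fun i _ => le_max_left _ _)
    have hmax : t a ≤ max 1 (t a) := le_max_right _ _
    have hmax1 : (1:ℝ) ≤ max 1 (t a) := le_max_left _ _
    have step1 : |1 - t a * ∏ i ∈ s, t i| ≤ |1 - t a| + t a * |1 - ∏ i ∈ s, t i| := by
      have : 1 - t a * ∏ i ∈ s, t i = (1 - t a) + t a * (1 - ∏ i ∈ s, t i) := by ring
      rw [this]
      calc |(1 - t a) + t a * (1 - ∏ i ∈ s, t i)|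
          ≤ |1 - t a| + |t a * (1 - ∏ i ∈ s, t i)| := abs_add_le _ _
        _ = |1 - t a| + t a * |1 - ∏ i ∈ s, t i| := by
            rw [abs_mul, abs_of_nonneg hta]
    have step2 : t a * |1 - ∏ i ∈ s, t i| ≤
        max 1 (t a) * ((∑ i ∈ s, |1 - t i|) * ∏ i ∈ s, max 1 (t i)) :=
      mul_le_mul hmax ihs (abs_nonneg _) (by linarith)
    have hX : (1:ℝ) ≤ max 1 (t a) * ∏ i ∈ s, max 1 (t i) := by nlinarith
    have step3 : |1 - t a| ≤ |1 - t a| * (max 1 (t a) * ∏ i ∈ s, max 1 (t i)) :=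
      le_mul_of_one_le_right (abs_nonneg _) hX
    calc |1 - t a * ∏ i ∈ s, t i| ≤ |1 - t a| + t a * |1 - ∏ i ∈ s, t i| := step1
      _ ≤ |1 - t a| * (max 1 (t a) * ∏ i ∈ s, max 1 (t i)) +
          max 1 (t a) * ((∑ i ∈ s, |1 - t i|) * ∏ i ∈ s, max 1 (t i)) := by linarith
      _ = (|1 - t a| + ∑ i ∈ s, |1 - t i|) * (max 1 (t a) * ∏ i ∈ s, max 1 (t i)) := by ring


lemma aux_row (d q : ℕ) (μ : ℝ) (hd4 : d ≤ 4) (hμ : 2 * (q:ℝ) ≤ μ)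
    (c : ℕ) (hc : c < q) (L : ℕ) :
    ∏ k ∈ range L, max 1 (μ / (μ - (d:ℝ) * c / 2 + k)) ≤ 2 ^ (d * c) := by
  have hq1 : (1:ℝ) ≤ q := by exact_mod_cast Nat.one_le_iff_ne_zero.2 (by omega)
  have hcq : (c:ℝ) + 1 ≤ q := by exact_mod_cast hc
  have hdc4 : d * c ≤ 4 * c := Nat.mul_le_mul_right c hd4
  have hdcr : (d:ℝ) * c / 2 ≤ 2 * ((q:ℝ) - 1) := by
    have : ((d*c : ℕ):ℝ) ≤ ((4*c : ℕ):ℝ) := by exact_mod_cast hdc4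
    push_cast at this
    nlinarith
  have hD2 : ∀ k : ℕ, 2 ≤ μ - (d:ℝ) * c / 2 + k := by
    intro k
    have : (0:ℝ) ≤ (k:ℝ) := Nat.cast_nonneg k
    nlinarith
  have hD0 : ∀ k : ℕ, (0:ℝ) < μ - (d:ℝ) * c / 2 + k := fun k => lt_of_lt_of_le two_pos (hD2 k)
  set m : ℕ := (d * c + 1) / 2 with hm_def
  set s : ℕ → ℝ := fun k => if 2 * k < d * c then μ / (μ - (d:ℝ) * c / 2 + k) else 1 with hs_def
  have hs1 : ∀ k, 1 ≤ s k := by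
    intro k
    simp only [hs_def]
    split_ifs with h
    · rw [le_div_iff₀ (hD0 k)]
      have : (2*k:ℝ) < (d*c:ℝ) := by exact_mod_cast h
      push_cast at this ⊢
      nlinarith
    · exact le_refl 1
  have hmax_le : ∀ k : ℕ, max 1 (μ / (μ - (d:ℝ) * c / 2 + k)) ≤ s k := by
    intro k
    simp only [hs_def]
    split_ifs with h
    · apply max_le _ le_rfl
      rw [le_div_iff₀ (hD0 k)]
      have : (2*k:ℝ) < (d*c:ℝ) := by exact_mod_cast h
      push_cast at this ⊢
      nlinarith
    · apply max_le le_rfl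
      rw [div_le_one (hD0 k)]
      have : (d*c:ℝ) ≤ (2*k:ℝ) := by exact_mod_cast Nat.le_of_not_lt h
      push_cast at this ⊢
      nlinarith
  have h2 : ∏ k ∈ range L, max 1 (μ / (μ - (d:ℝ) * c / 2 + k)) ≤ ∏ k ∈ range L, s k :=
    prod_le_prod (fun k _ => le_trans zero_le_one (le_max_left _ _)) (fun k _ => hmax_le k)
  have h3 : ∏ k ∈ range L, s k ≤ ∏ k ∈ range (L + m), s k := by
    rw [← prod_range_mul_prod_Ico s (Nat.le_add_right L m)]
    apply le_mul_of_one_le_right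
    · exact prod_nonneg fun k _ => le_trans zero_le_one (hs1 k)
    · calc (1:ℝ) = ∏ _k ∈ Ico L (L+m), 1 := by simp
        _ ≤ ∏ k ∈ Ico L (L+m), s k := prod_le_prod (by simp) (fun k _ => hs1 k)
  have h4 : ∏ k ∈ range (L + m), s k = ∏ k ∈ range m, s k := by
    rw [← prod_range_mul_prod_Ico s (Nat.le_add_left m L)]
    have : ∏ k ∈ Ico m (L + m), s k = 1 := by
      apply prod_eq_one
      intro k hk
      have hkm : m ≤ k := (mem_Ico.1 hk).1
      simp only [hs_def]
      rw [if_neg (by omega)]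
    rw [this, mul_one]
  have h6 : ∏ k ∈ range m, s k = ∏ k ∈ range m, (μ / (μ - (d:ℝ) * c / 2 + k)) := by
    apply prod_congr rfl
    intro k hk
    have : k < m := mem_range.1 hk
    simp only [hs_def]
    rw [if_pos (by omega)]
  have h7 : ∏ k ∈ range m, (μ / (μ - (d:ℝ) * c / 2 + k)) ≤ 2 ^ (d * c) := by
    rcases Nat.eq_zero_or_pos m with h0 | h0
    · rw [h0]
      simp
      exact one_le_pow₀ (by norm_num)
    · have hc1 : 1 ≤ c := by omega
      have hm2c : m ≤ 2 * c := by omega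
      have hmu2 : (m:ℝ) + 2 ≤ μ := by
        have : ((m:ℕ):ℝ) ≤ 2*(c:ℝ) := by exact_mod_cast hm2c
        nlinarith
      have hDm : ∀ k ∈ range m, (0:ℝ) ≤ μ - m + k ∧ μ - m + k ≤ μ - (d:ℝ)*c/2 + k := by
        intro k hk
        have hk0 : (0:ℝ) ≤ (k:ℝ) := Nat.cast_nonneg k
        have hdc2m : (d*c:ℝ) ≤ 2*(m:ℝ) := by exact_mod_cast (by omega : d*c ≤ 2*m)
        constructor
        · nlinarith
        · push_cast at hdc2m ⊢
          nlinarith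
      have hchain : ∏ k ∈ range m, (μ - (m:ℝ) + k) ≤ ∏ k ∈ range m, (μ - (d:ℝ)*c/2 + k) :=
        prod_le_prod (fun k hk => (hDm k hk).1) (fun k hk => (hDm k hk).2)
      have hcore := aux_core m h0 μ hmu2
      have h4m : (4:ℝ)^m ≤ 2 * 2^(d*c) := by
        have : (4:ℝ)^m = 2^(2*m) := by rw [pow_mul]; norm_num
        rw [this]
        calc (2:ℝ)^(2*m) ≤ 2^(d*c+1) := by
              apply pow_le_pow_right₀ (by norm_num) (by omega)
          _ = 2 * 2^(d*c) := by rw [pow_succ]; ring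
      have hPpos : (0:ℝ) < ∏ k ∈ range m, (μ - (d:ℝ)*c/2 + k) := prod_pos fun k _ => hD0 k
      rw [prod_div_distrib, prod_const, card_range, div_le_iff₀ hPpos]
      have hPm : (0:ℝ) ≤ ∏ k ∈ range m, (μ - (m:ℝ) + k) :=
        prod_nonneg fun k hk => (hDm k hk).1
      nlinarith [mul_le_mul_of_nonneg_left hchain (le_of_lt (by positivity : (0:ℝ) < 4^m)),
        mul_le_mul_of_nonneg_right h4m hPm]
  calc ∏ k ∈ range L, max 1 (μ / (μ - (d:ℝ) * c / 2 + k)) ≤ ∏ k ∈ range L, s k := h2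
    _ ≤ ∏ k ∈ range (L + m), s k := h3
    _ = ∏ k ∈ range m, s k := h4
    _ = ∏ k ∈ range m, (μ / (μ - (d:ℝ) * c / 2 + k)) := h6
    _ ≤ 2 ^ (d * c) := h7


lemma sum_sq_le (q : ℕ) (f : ℕ → ℕ) :
    ∑ j ∈ range q, f j ^ 2 ≤ (∑ j ∈ range q, f j) ^ 2 := by
  calc ∑ j ∈ range q, f j ^ 2 ≤ ∑ j ∈ range q, f j * ∑ i ∈ range q, f i := by
        apply sum_le_sum
        intro j hj
        rw [pow_two]
        exact Nat.mul_le_mul_left _ (single_le_sum (fun i _ => Nat.zero_le _) hj)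
    _ = (∑ j ∈ range q, f j) ^ 2 := by rw [← sum_mul, pow_two]

lemma antitone_sum_sq (q : ℕ) (f : ℕ → ℕ) (hf : ∀ i j, i ≤ j → f j ≤ f i) :
    2 * ∑ j ∈ range q, j * f j + ∑ j ∈ range q, f j ^ 2 ≤ (∑ j ∈ range q, f j) ^ 2 := by
  induction q with
  | zero => simp
  | succ q ih =>
    rw [sum_range_succ, sum_range_succ, sum_range_succ (f := f)]
    have hq : q * f q ≤ (∑ j ∈ range q, f j) * f q := by
      rcases Nat.eq_zero_or_pos (f q) with h0 | h0
      · simp [h0]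
      · apply Nat.mul_le_mul_right
        calc q = ∑ _j ∈ range q, 1 := by simp
          _ ≤ ∑ j ∈ range q, f j := sum_le_sum fun j hj => by
              have := hf j q (le_of_lt (mem_range.1 hj))
              omega
    nlinarith [ih]


/-- The generalized Pochhammer symbol `(μ)_λ = (μ)_λ^{2/d} = ∏_{j=1}^q (μ − d(j−1)/2)_{λ_j}`. -/
noncomputable def genPochhammer (q : ℕ) (d : ℕ) (μ : ℝ) (lam : Fin q → ℕ) : ℝ :=
  ∏ j : Fin q, (ascPochhammer ℝ (lam j)).eval (μ - (d : ℝ) * (j : ℕ) / 2)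

set_option maxHeartbeats 1000000 in
/-- For a partition `λ` with at most `q` parts, `d ∈ {1,2,4}` and `μ ≥ 2q`,
`|1 − μ^{|λ|}/(μ)_λ| ≤ d q 2^{dq(q−1)/2} |λ|² / μ`. -/
theorem stmt14 (q d : ℕ) (hd : d ∈ ({1, 2, 4} : Set ℕ)) (lam : Fin q → ℕ)
    (hlam : Antitone lam) (μ : ℝ) (hμ : (2 * q : ℝ) ≤ μ) :
    |1 - μ ^ (∑ i, lam i) / genPochhammer q d μ lam| ≤
      (d : ℝ) * q * 2 ^ (d * q * (q - 1) / 2) * ((∑ i, lam i : ℕ) : ℝ) ^ 2 / μ := by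
  simp only [Set.mem_insert_iff, Set.mem_singleton_iff] at hd
  have hd1 : 1 ≤ d := by rcases hd with h | h | h <;> omega
  have hd4 : d ≤ 4 := by rcases hd with h | h | h <;> omega
  rcases Nat.eq_zero_or_pos q with hq0 | hq0
  · subst hq0
    simp [genPochhammer]
  -- setup
  have hq1 : (1:ℝ) ≤ q := by exact_mod_cast hq0
  have hμ0 : (0:ℝ) < μ := by nlinarith
  set n : ℕ := ∑ i, lam i with hn_def
  set E : ℕ := d * q * (q - 1) / 2 with hE_def
  set D : Fin q → ℕ → ℝ := fun j k => μ - (d:ℝ) * (j:ℕ) / 2 + k with hD_def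
  have hjb : ∀ j : Fin q, (d:ℝ) * (j:ℕ) / 2 ≤ 2 * ((q:ℝ) - 1) := by
    intro j
    have h1 : ((j:ℕ):ℝ) + 1 ≤ q := by exact_mod_cast j.2
    have h2 : ((d:ℕ):ℝ) ≤ 4 := by exact_mod_cast hd4
    have h3 : (0:ℝ) ≤ ((j:ℕ):ℝ) := Nat.cast_nonneg _
    nlinarith
  have hD2 : ∀ (j : Fin q) (k : ℕ), 2 ≤ D j k := by
    intro j k
    have := hjb j
    have hk0 : (0:ℝ) ≤ (k:ℝ) := Nat.cast_nonneg k
    simp only [hD_def]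
    nlinarith
  have hD0 : ∀ (j : Fin q) (k : ℕ), (0:ℝ) < D j k := fun j k =>
    lt_of_lt_of_le two_pos (hD2 j k)
  have hDq : ∀ (j : Fin q) (k : ℕ), μ / q ≤ D j k := by
    intro j k
    have := hjb j
    have hk0 : (0:ℝ) ≤ (k:ℝ) := Nat.cast_nonneg k
    rw [div_le_iff₀ (by linarith : (0:ℝ) < (q:ℝ))]
    simp only [hD_def]
    nlinarith
  -- the finset of cells
  set cells : Finset ((_ : Fin q) × ℕ) := univ.sigma (fun j => range (lam j)) with hcells
  set t : (_ : Fin q) × ℕ → ℝ := fun p => μ / D p.1 p.2 with ht_def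
  have hgen : genPochhammer q d μ lam = ∏ j : Fin q, ∏ k ∈ range (lam j), D j k := by
    unfold genPochhammer
    exact prod_congr rfl fun j _ => ascPochhammer_eval_prod _ _
  have hratio : μ ^ n / genPochhammer q d μ lam = ∏ p ∈ cells, t p := by
    rw [hcells, prod_sigma, hgen]
    rw [show μ ^ n = ∏ j : Fin q, μ ^ lam j from (prod_pow_eq_pow_sum univ lam μ).symm]
    rw [← prod_div_distrib]
    apply prod_congr rfl
    intro j _
    simp only [ht_def]
    rw [prod_div_distrib, prod_const, card_range]
  have hq0' : (0:ℝ) < q := by linarith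
  have htpos : ∀ p ∈ cells, 0 ≤ t p := fun p _ => le_of_lt (div_pos hμ0 (hD0 p.1 p.2))
  have htele := aux_telescope cells t htpos
  -- per-cell bound on |1 - t p|
  have hcell : ∀ p ∈ cells, |1 - t p| ≤ ((2 * p.2 + d * (p.1:ℕ) : ℕ):ℝ) * (q / (2*μ)) := by
    rintro ⟨j, k⟩ _
    have hDne : D j k ≠ 0 := ne_of_gt (hD0 j k)
    have h1 : 1 - t ⟨j, k⟩ = (D j k - μ) / D j k := by
      simp only [ht_def]
      rw [sub_div, div_self hDne]
    rw [h1, abs_div, abs_of_pos (hD0 j k)]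
    have h3 : |D j k - μ| ≤ ((2 * k + d * (j:ℕ) : ℕ):ℝ) / 2 := by
      simp only [hD_def]
      rw [abs_le]
      have hk0 : (0:ℝ) ≤ (k:ℝ) := Nat.cast_nonneg k
      have hj0 : (0:ℝ) ≤ ((j:ℕ):ℝ) := Nat.cast_nonneg _
      have hd0 : (0:ℝ) ≤ (d:ℝ) := Nat.cast_nonneg d
      constructor <;> push_cast <;> nlinarith
    calc |D j k - μ| / D j k ≤ (((2 * k + d * (j:ℕ) : ℕ):ℝ) / 2) / (μ / q) := by
          apply div_le_div₀ (by positivity) h3 (div_pos hμ0 hq0') (hDq j k)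
      _ = ((2 * k + d * (j:ℕ) : ℕ):ℝ) * (q / (2*μ)) := by
          rw [div_div_div_comm]
          field_simp [ne_of_gt hμ0, ne_of_gt hq0']
          try ring
          try exact Or.inl trivial
  -- total sum bound
  set A : ℕ := ∑ j : Fin q, ∑ k ∈ range (lam j), (2 * k + d * (j:ℕ)) with hA_def
  have hsum : ∑ p ∈ cells, |1 - t p| ≤ (A:ℝ) * (q / (2*μ)) := by
    calc ∑ p ∈ cells, |1 - t p|
        ≤ ∑ p ∈ cells, ((2 * p.2 + d * (p.1:ℕ) : ℕ):ℝ) * (q / (2*μ)) := sum_le_sum hcell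
      _ = (∑ p ∈ cells, ((2 * p.2 + d * (p.1:ℕ) : ℕ):ℝ)) * (q / (2*μ)) := by rw [sum_mul]
      _ = (A:ℝ) * (q / (2*μ)) := by
          congr 1
          rw [hA_def, hcells, sum_sigma]
          push_cast
          rfl
  -- product bound
  obtain ⟨tt, htt⟩ : ∃ tt, q * (q - 1) = tt + tt := by
    obtain ⟨r, hr⟩ := Nat.even_mul_succ_self (q - 1)
    exact ⟨r, by rw [show q * (q-1) = (q-1) * (q-1+1) by rw [Nat.sub_add_cancel hq0]; ring, hr]⟩
  have hE_t : E = d * tt := by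
    rw [hE_def, mul_assoc, htt, show d * (tt + tt) = 2 * (d * tt) by ring]
    exact Nat.mul_div_cancel_left _ (by norm_num)
  have hprodmax : ∏ p ∈ cells, max 1 (t p) ≤ (2:ℝ) ^ E := by
    rw [hcells, prod_sigma]
    calc ∏ j : Fin q, ∏ k ∈ range (lam j), max 1 (t ⟨j, k⟩)
        ≤ ∏ j : Fin q, (2:ℝ) ^ (d * (j:ℕ)) := by
          apply prod_le_prod
          · exact fun j _ => prod_nonneg fun k _ =>
              le_trans zero_le_one (le_max_left _ _)
          · intro j _
            have := aux_row d q μ hd4 hμ (j:ℕ) j.2 (lam j)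
            simpa only [ht_def, hD_def] using this
      _ = (2:ℝ) ^ (∑ j : Fin q, d * (j:ℕ)) := prod_pow_eq_pow_sum _ _ _
      _ = (2:ℝ) ^ E := by
          congr 1
          rw [Fin.sum_univ_eq_sum_range (fun i => d * i) q, ← mul_sum, sum_range_id,
            show q * (q-1) / 2 = tt by omega, hE_t]
  -- bound on A
  set g : ℕ → ℕ := fun i => if h : i < q then lam ⟨i, h⟩ else 0 with hg_def
  have hg : ∀ j : Fin q, g (j:ℕ) = lam j := by
    intro j
    simp only [hg_def, dif_pos j.2, Fin.eta]
  have hgmono : ∀ i j, i ≤ j → g j ≤ g i := by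
    intro i j hij
    simp only [hg_def]
    split_ifs with h1 h2 h2
    · exact hlam (by exact_mod_cast hij : (⟨i, h2⟩ : Fin q) ≤ ⟨j, h1⟩)
    · omega
    · exact Nat.zero_le _
    · exact Nat.zero_le _
  have hgn : ∑ i ∈ range q, g i = n := by
    rw [← Fin.sum_univ_eq_sum_range g q, hn_def]
    exact Finset.sum_congr rfl fun j _ => hg j
  have hA1 : A ≤ ∑ i ∈ range q, (g i ^ 2 + d * i * g i) := by
    rw [hA_def, ← Fin.sum_univ_eq_sum_range (fun i => g i ^ 2 + d * i * g i) q]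
    apply sum_le_sum
    intro j _
    rw [hg j]
    have hgauss : (∑ k ∈ range (lam j), k) * 2 = lam j * (lam j - 1) :=
      Finset.sum_range_id_mul_two (lam j)
    have hexp : ∑ k ∈ range (lam j), (2 * k + d * (j:ℕ)) =
        2 * (∑ k ∈ range (lam j), k) + d * (j:ℕ) * lam j := by
      rw [sum_add_distrib, ← mul_sum, sum_const, card_range, smul_eq_mul]
      ring
    rw [hexp]
    have h1 : 2 * (∑ k ∈ range (lam j), k) ≤ lam j ^ 2 := by
      have : lam j * (lam j - 1) ≤ lam j * lam j := Nat.mul_le_mul_left _ (Nat.sub_le _ _)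
      rw [pow_two]
      omega
    omega
  have hsq := sum_sq_le q g
  have hanti := antitone_sum_sq q g hgmono
  rw [hgn] at hsq hanti
  have hA2 : (A:ℝ) ≤ 2 * d * (n:ℝ)^2 := by
    have c1 : (A:ℝ) ≤ ∑ i ∈ range q, ((g i:ℝ) ^ 2 + (d:ℝ) * i * g i) := by
      calc (A:ℝ) ≤ ((∑ i ∈ range q, (g i ^ 2 + d * i * g i) : ℕ):ℝ) := by exact_mod_cast hA1
        _ = ∑ i ∈ range q, ((g i:ℝ) ^ 2 + (d:ℝ) * i * g i) := by push_cast; rfl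
    have c2 : ∑ i ∈ range q, ((g i:ℝ) ^ 2 + (d:ℝ) * i * g i) =
        (((∑ i ∈ range q, g i ^ 2 : ℕ)):ℝ) + (d:ℝ) * ((∑ i ∈ range q, i * g i : ℕ):ℝ) := by
      push_cast
      rw [sum_add_distrib]
      congr 1
      rw [mul_sum]
      apply Finset.sum_congr rfl
      intro i _
      ring
    have c3 : ((∑ i ∈ range q, g i ^ 2 : ℕ):ℝ) ≤ (n:ℝ)^2 := by exact_mod_cast hsq
    have c4 : 2 * ((∑ i ∈ range q, i * g i : ℕ):ℝ) ≤ (n:ℝ)^2 := by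
      have : 2 * (∑ i ∈ range q, i * g i) ≤ n ^ 2 := by omega
      exact_mod_cast this
    have hd1' : (1:ℝ) ≤ d := by exact_mod_cast hd1
    have hn0 : (0:ℝ) ≤ (n:ℝ)^2 := by positivity
    rw [c2] at c1
    nlinarith
  -- finish
  rw [hratio]
  have h2E0 : (0:ℝ) < (2:ℝ)^E := by positivity
  have hAq0 : (0:ℝ) ≤ (A:ℝ) * (q / (2*μ)) := by positivity
  calc |1 - ∏ p ∈ cells, t p|
      ≤ (∑ p ∈ cells, |1 - t p|) * ∏ p ∈ cells, max 1 (t p) := htele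
    _ ≤ ((A:ℝ) * (q / (2*μ))) * (2:ℝ)^E := by
        apply mul_le_mul hsum hprodmax (prod_nonneg fun p _ =>
          le_trans zero_le_one (le_max_left _ _)) hAq0
    _ ≤ (d : ℝ) * q * 2 ^ E * ((n:ℕ):ℝ) ^ 2 / μ := by
        rw [show ((A:ℝ) * (q / (2*μ))) * (2:ℝ)^E = ((A:ℝ) * q * 2^E / 2) / μ by ring]
        rw [div_le_div_iff_of_pos_right hμ0]
        nlinarith [mul_nonneg (mul_nonneg (sub_nonneg.2 hA2) (le_of_lt hq0'))
          (le_of_lt h2E0)]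
end
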